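/- arXiv:2510.03234 — 2 statements merged into one kernel-verified Lean document; each statement's English description precedes it below -/
import Mathlib

section
/- For all natural numbers S, U, G with S + U + G = 13, let N = S + N_U + N_G where N_U ~ Binomial(U, 3/4) and N_G ~ Binomial(G, 1/2) are independent. Then P(1 ≤ N ≤ 3) ≤ P(4 ≤ N ≤ 6) ≤ P(7 ≤ N ≤ 9). In particular, it is never strictly optimal for a contestant maximizing the probability of winning to select Lucky Range 1–3. -/
open scoped ENNReal

/-- The distribution on `ℕ` of a `Binomial(n, p)` random variable. -/
noncomputable def binomPMF (p : ℝ≥0∞) (h : p ≤ 1) (n : ℕ) : PMF ℕ :=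
  (PMF.binomial p.toNNReal (by simpa using ENNReal.toNNReal_mono ENNReal.one_ne_top h) n).map Fin.val

/-- The probability that an `ℕ`-valued random variable with distribution `μ` lands in `s`. -/
noncomputable def prob (μ : PMF ℕ) (s : Set ℕ) : ℝ≥0∞ := μ.toMeasure s

/-- The distribution of `S + X + Y` where `X ~ μ` and `Y ~ ν` are independent. -/
noncomputable def shiftedSum (S : ℕ) (μ ν : PMF ℕ) : PMF ℕ :=
  μ.bind fun i => ν.map fun j => S + i + j

/-- Integer weights: `4^U * 2^G` times the probability of landing in `[a, b]`. -/
def luckyA (S U G a b : ℕ) : ℕ :=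
  ∑ i ∈ Finset.range (U+1), ∑ j ∈ Finset.range (G+1),
    if a ≤ S+i+j ∧ S+i+j ≤ b then 3^i * U.choose i * G.choose j else 0

open Classical in
lemma prob_shiftedSum (p q : ℝ≥0∞) (hp : p ≤ 1) (hq : q ≤ 1) (S U G : ℕ) (s : Set ℕ) :
    prob (shiftedSum S (binomPMF p hp U) (binomPMF q hq G)) s
      = ∑ i : Fin (U+1), ∑ j : Fin (G+1),
          (if S + (i : ℕ) + (j : ℕ) ∈ s then
            PMF.binomial p.toNNReal (by rw [← ENNReal.toNNReal_one]; exact ENNReal.toNNReal_mono ENNReal.one_ne_top hp) U i *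
              PMF.binomial q.toNNReal (by rw [← ENNReal.toNNReal_one]; exact ENNReal.toNNReal_mono ENNReal.one_ne_top hq) G j else 0) := by
  rw [prob, shiftedSum, binomPMF, binomPMF, PMF.bind_map,
    PMF.toMeasure_bind_apply _ _ _ .of_discrete, tsum_fintype]
  refine Finset.sum_congr rfl fun i _ => ?_
  rw [Function.comp_apply, PMF.map_comp,
    PMF.toMeasure_map_apply _ _ _ Measurable.of_discrete .of_discrete,
    PMF.toMeasure_apply_fintype, Finset.mul_sum]
  refine Finset.sum_congr rfl fun j _ => ?_
  rw [Set.indicator_apply]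
  simp only [Set.mem_preimage, Function.comp_apply]
  split_ifs <;> simp

lemma binomial_toNNReal_apply (p : ℝ≥0∞) (hp : p ≤ 1) (h : p.toNNReal ≤ 1) (n : ℕ)
    (i : Fin (n + 1)) : PMF.binomial p.toNNReal h n i
      = p ^ (i : ℕ) * (1 - p) ^ (n - (i : ℕ)) * (n.choose i : ℕ) := by
  have hpt : p ≠ ⊤ := ne_top_of_le_ne_top ENNReal.one_ne_top hp
  rw [PMF.binomial_apply]
  push_cast [ENNReal.coe_sub, ENNReal.coe_toNNReal hpt]
  rfl

lemma one_sub_half : (1:ℝ≥0∞) - 2⁻¹ = 2⁻¹ := by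
  rw [← one_div]; norm_num

lemma one_sub_three_quarters : (1:ℝ≥0∞) - 3/4 = 4⁻¹ :=
  ENNReal.sub_eq_of_eq_add (ENNReal.div_lt_top (by norm_num) (by norm_num)).ne (by
    have h4 : (4:ℝ≥0∞) * 4⁻¹ = 1 := ENNReal.mul_inv_cancel (by norm_num) (by norm_num)
    calc (1:ℝ≥0∞) = 4 * 4⁻¹ := h4.symm
      _ = 4⁻¹ + 3 * 4⁻¹ := by ring
      _ = 4⁻¹ + 3/4 := by rw [div_eq_mul_inv])

lemma prob_eq_luckyA (S U G a b : ℕ) (h34 : (3:ℝ≥0∞)/4 ≤ 1) (h12 : (1:ℝ≥0∞)/2 ≤ 1) :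
    prob (shiftedSum S (binomPMF (3/4) h34 U) (binomPMF (1/2) h12 G)) {k | a ≤ k ∧ k ≤ b}
      = (luckyA S U G a b : ℝ≥0∞) * ((4:ℝ≥0∞)⁻¹ ^ U * (2:ℝ≥0∞)⁻¹ ^ G) := by
  rw [prob_shiftedSum]
  simp only [binomial_toNNReal_apply _ h34, binomial_toNNReal_apply _ h12]
  simp only [Fin.val_last, one_sub_three_quarters, one_sub_half,
    (by norm_num : (1:ℝ≥0∞) - 1/2 = 2⁻¹), Set.mem_setOf_eq, one_div]
  rw [Fin.sum_univ_eq_sum_range (fun i => ∑ j : Fin (G+1),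
    if a ≤ S + i + (j:ℕ) ∧ S + i + (j:ℕ) ≤ b then
      (3/4:ℝ≥0∞)^i * 4⁻¹^(U-i) * (U.choose i) * ((2⁻¹:ℝ≥0∞)^(j:ℕ) * 2⁻¹^(G-(j:ℕ)) * (G.choose (j:ℕ))) else 0)]
  rw [luckyA]
  push_cast
  rw [Finset.sum_mul]
  refine Finset.sum_congr rfl fun i hi => ?_
  rw [Fin.sum_univ_eq_sum_range (fun j =>
    if a ≤ S + i + j ∧ S + i + j ≤ b then
      (3/4:ℝ≥0∞)^i * 4⁻¹^(U-i) * (U.choose i) * ((2⁻¹:ℝ≥0∞)^j * 2⁻¹^(G-j) * (G.choose j)) else 0)]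
  rw [Finset.sum_mul]
  refine Finset.sum_congr rfl fun j hj => ?_
  rw [ite_mul, zero_mul]
  rw [Finset.mem_range] at hi hj
  have hiU : i ≤ U := Nat.lt_succ_iff.mp hi
  have hjG : j ≤ G := Nat.lt_succ_iff.mp hj
  refine if_congr Iff.rfl ?_ rfl
  have h1 : (4:ℝ≥0∞)⁻¹^i * 4⁻¹^(U-i) = 4⁻¹^U := by
    rw [← pow_add, Nat.add_sub_cancel' hiU]
  have h2 : (2:ℝ≥0∞)⁻¹^j * 2⁻¹^(G-j) = 2⁻¹^G := by
    rw [← pow_add, Nat.add_sub_cancel' hjG]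
  rw [div_eq_mul_inv, mul_pow, ← h1, ← h2]
  ring

lemma luckyA_mono (S U G : ℕ) (h : S + U + G = 13) :
    luckyA S U G 1 3 ≤ luckyA S U G 4 6 ∧ luckyA S U G 4 6 ≤ luckyA S U G 7 9 := by
  have hG : G = 13 - S - U := by omega
  subst hG
  have hS : S ≤ 13 := by omega
  have hU : U ≤ 13 - S := by omega
  clear h
  interval_cases S <;> interval_cases U <;> decide

/-- In the three-category model with `S + U + G = 13`, the probability of landing in
Lucky Range 1–3 is at most that of 4–6, which is at most that of 7–9: it is never
strictly optimal to select Lucky Range 1–3. -/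
theorem lucky13_never_pick_1_3 (S U G : ℕ) (h : S + U + G = 13) :
    prob (shiftedSum S (binomPMF (3/4) (ENNReal.div_le_of_le_mul (by norm_num)) U) (binomPMF (1/2) (by norm_num) G)) {k | 1 ≤ k ∧ k ≤ 3} ≤
      prob (shiftedSum S (binomPMF (3/4) (ENNReal.div_le_of_le_mul (by norm_num)) U) (binomPMF (1/2) (by norm_num) G)) {k | 4 ≤ k ∧ k ≤ 6} ∧
    prob (shiftedSum S (binomPMF (3/4) (ENNReal.div_le_of_le_mul (by norm_num)) U) (binomPMF (1/2) (by norm_num) G)) {k | 4 ≤ k ∧ k ≤ 6} ≤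
      prob (shiftedSum S (binomPMF (3/4) (ENNReal.div_le_of_le_mul (by norm_num)) U) (binomPMF (1/2) (by norm_num) G)) {k | 7 ≤ k ∧ k ≤ 9} := by
  rw [prob_eq_luckyA, prob_eq_luckyA, prob_eq_luckyA]
  obtain ⟨k1, k2⟩ := luckyA_mono S U G h
  exact ⟨mul_le_mul_left (Nat.cast_le.2 k1) _, mul_le_mul_left (Nat.cast_le.2 k2) _⟩
end

section
/- For every natural number S with 0 ≤ S ≤ 5, let N = S + B where B ~ Binomial(13 − S, 1/2). Then P(7 ≤ N ≤ 9) is greater than or equal to each of P(1 ≤ N ≤ 3), P(4 ≤ N ≤ 6), P(10 ≤ N ≤ 12), and P(N = 13). Hence in the two-category model a contestant with at most 5 Sure questions who maximizes the probability of winning should select Lucky Range 7–9. -/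
open scoped ENNReal

/-- In the two-category model, the number of correct answers of a contestant with
`S` Sure questions who guesses on the remaining `13 - S` questions:
`N = S + B` with `B ~ Binomial(13 - S, 1/2)`. -/
noncomputable def N (S : ℕ) : PMF ℕ := (binomPMF (1/2) (by norm_num) (13 - S)).map (fun b => S + b)


lemma prob_Icc (μ : PMF ℕ) (a b : ℕ) :
    prob μ {k | a ≤ k ∧ k ≤ b} = ∑ k ∈ Finset.Icc a b, μ k := by
  rw [prob, PMF.toMeasure_apply (hs := by trivial),
    tsum_eq_sum (s := Finset.Icc a b) (fun k hk =>
      Set.indicator_of_notMem (by simpa using hk) _)]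
  exact Finset.sum_congr rfl fun k hk => Set.indicator_of_mem (by simpa using hk) _

lemma prob_single (μ : PMF ℕ) (a : ℕ) : prob μ {a} = μ a := by
  rw [prob, PMF.toMeasure_apply_singleton _ _ (by trivial)]

lemma binomPMF_apply (p : ℝ≥0∞) (h : p ≤ 1) (n m : ℕ) :
    binomPMF p h n m = if m ≤ n then p ^ m * (1 - p) ^ (n - m) * (n.choose m) else 0 := by
  rw [binomPMF, PMF.map_apply, tsum_fintype]
  split
  · rename_i hm
    rw [Finset.sum_eq_single (⟨m, by omega⟩ : Fin (n+1))]
    · rw [if_pos rfl]; erw [PMF.binomial_apply]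
      simp [Fin.last, ENNReal.coe_toNNReal (ne_top_of_le_ne_top ENNReal.one_ne_top h)]
    · intro b _ hb
      rw [if_neg]
      intro e
      exact hb (by simpa [Fin.ext_iff] using e.symm)
    · simp
  · rename_i hm
    apply Finset.sum_eq_zero
    intro b _
    rw [if_neg]
    intro e
    omega

lemma N_apply (S k : ℕ) :
    N S k = if S ≤ k then binomPMF (1/2) (by norm_num) (13 - S) (k - S) else 0 := by
  rw [N, PMF.map_apply]
  split
  · rename_i h
    rw [tsum_eq_single (k - S)]
    · rw [Nat.add_sub_cancel' h, if_pos rfl]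
    · intro b hb; rw [if_neg]; omega
  · rename_i h
    apply ENNReal.tsum_eq_zero.mpr
    intro b; rw [if_neg]; omega

set_option maxHeartbeats 2000000 in
/-- In the two-category model a contestant with at most 5 Sure questions who
maximizes the probability of winning should select Lucky Range 7–9. -/
theorem lucky13_two_cat_win_prob_7_9 (S : ℕ) (hS : S ≤ 5) :
    prob (N S) {k | 7 ≤ k ∧ k ≤ 9} ≥ prob (N S) {k | 1 ≤ k ∧ k ≤ 3} ∧
    prob (N S) {k | 7 ≤ k ∧ k ≤ 9} ≥ prob (N S) {k | 4 ≤ k ∧ k ≤ 6} ∧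
    prob (N S) {k | 7 ≤ k ∧ k ≤ 9} ≥ prob (N S) {k | 10 ≤ k ∧ k ≤ 12} ∧
    prob (N S) {k | 7 ≤ k ∧ k ≤ 9} ≥ prob (N S) {13} := by
  have h2 : (1 - 1/2 : ℝ≥0∞) = 1/2 := by
    rw [show (1/2:ℝ≥0∞) = 2⁻¹ by norm_num, ENNReal.one_sub_inv_two]
  have e79 : Finset.Icc 7 9 = {7,8,9} := by decide
  have e13 : Finset.Icc 1 3 = {1,2,3} := by decide
  have e46 : Finset.Icc 4 6 = {4,5,6} := by decide
  have e1012 : Finset.Icc 10 12 = {10,11,12} := by decide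
  interval_cases S <;>
    refine ⟨?_, ?_, ?_, ?_⟩ <;>
    simp only [prob_Icc, prob_single, e79, e13, e46, e1012] <;>
    simp only [Finset.sum_insert, Finset.mem_insert, Finset.sum_singleton, N_apply,
      binomPMF_apply, h2] <;>
    norm_num [← pow_add, Nat.choose] <;>
    ring_nf <;>
    first
      | exact le_rfl
      | (gcongr <;> norm_num)
      | exact le_mul_of_one_le_right' (by norm_num)
end
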